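/- Let r ≥ 0, let (x_n) be a sequence in an S-metric space (X,S), and let (ξ_n) be a sequence of points of st-LIM^r x_n that converges to ξ in (X,S). Then ξ ∈ st-LIM^r x_n. -/

import Mathlib

open Filter

open scoped Classical in
/-- Natural density: `A ⊆ ℕ` has density `d` if `|{k ∈ A : k < n}|/n → d`. -/
def HasDensity (A : Set ℕ) (d : ℝ) : Prop :=
  Filter.Tendsto
    (fun n : ℕ => (((Finset.range n).filter (fun k => k ∈ A)).card : ℝ) / n)
    Filter.atTop (nhds d)

/-- `S` is an S-metric on `X`. -/
structure IsSMetric {X : Type*} (S : X → X → X → ℝ) : Prop where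
  nonneg : ∀ x y z, 0 ≤ S x y z
  eq_zero_iff : ∀ x y z, S x y z = 0 ↔ x = y ∧ y = z
  triangle : ∀ x y z a, S x y z ≤ S x x a + S y y a + S z z a

/-- Ordinary convergence of a sequence in an S-metric space. -/
def SConvergesTo {X : Type*} (S : X → X → X → ℝ) (x : ℕ → X) (l : X) : Prop :=
  ∀ ε : ℝ, 0 < ε → ∃ N : ℕ, ∀ n ≥ N, S (x n) (x n) l < ε

/-- Statistical convergence of a sequence in an S-metric space. -/
def SStatConvergesTo {X : Type*} (S : X → X → X → ℝ) (x : ℕ → X) (l : X) : Prop :=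
  ∀ ε : ℝ, 0 < ε → HasDensity {n : ℕ | ε ≤ S (x n) (x n) l} 0

/-- Cauchy sequence in an S-metric space. -/
def SCauchy {X : Type*} (S : X → X → X → ℝ) (x : ℕ → X) : Prop :=
  ∀ ε : ℝ, 0 < ε → ∃ k : ℕ, ∀ n ≥ k, ∀ m ≥ k, S (x n) (x n) (x m) < ε

/-- Statistically Cauchy sequence in an S-metric space. -/
def SStatCauchy {X : Type*} (S : X → X → X → ℝ) (x : ℕ → X) : Prop :=
  ∀ ε : ℝ, 0 < ε → ∃ N : ℕ, HasDensity {n : ℕ | ε ≤ S (x n) (x n) (x N)} 0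

/-- Statistically bounded sequence in an S-metric space. -/
def SStatBounded {X : Type*} (S : X → X → X → ℝ) (x : ℕ → X) : Prop :=
  ∀ u : X, ∃ B : ℝ, 0 < B ∧ HasDensity {n : ℕ | B ≤ S (x n) (x n) u} 0

/-- Rough convergence with roughness degree `r`. -/
def SRoughConvergesTo {X : Type*} (S : X → X → X → ℝ) (r : ℝ) (x : ℕ → X) (p : X) : Prop :=
  ∀ ε : ℝ, 0 < ε → ∃ k : ℕ, ∀ n ≥ k, S (x n) (x n) p < r + ε

/-- Rough statistical convergence with roughness degree `r`. -/
def SRoughStatConvergesTo {X : Type*} (S : X → X → X → ℝ) (r : ℝ) (x : ℕ → X) (p : X) : Prop :=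
  ∀ ε : ℝ, 0 < ε → HasDensity {n : ℕ | r + ε ≤ S (x n) (x n) p} 0

/-- The rough statistical limit set `st-LIM^r x_n`. -/
def stLIM {X : Type*} (S : X → X → X → ℝ) (r : ℝ) (x : ℕ → X) : Set X :=
  {p : X | SRoughStatConvergesTo S r x p}

/-- The topology on `X` generated by the open balls of the S-metric. -/
def sBallTopology {X : Type*} (S : X → X → X → ℝ) : TopologicalSpace X :=
  TopologicalSpace.generateFrom
    {B : Set X | ∃ c : X, ∃ ε : ℝ, 0 < ε ∧ B = {y : X | S y y c < ε}}

/-! Symmetry `S x x y = S y y x` and the triangle inequality give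
`S(x_n, x_n, ξ) ≤ S(x_n, x_n, ξ_N) + 2 S(ξ_N, ξ_N, ξ)`, so moving the centre from `ξ_N` to `ξ`
costs at most `2 S(ξ_N, ξ_N, ξ)` in roughness. Since `ξ_N → ξ`, the point `ξ` lies in
`st-LIM^{r'} x_n` for every `r' > r`, and `st-LIM^r x_n` is the intersection of these sets. -/

open scoped Classical in
lemma HasDensity.zero_mono {A B : Set ℕ} (h : A ⊆ B) (hB : HasDensity B 0) :
    HasDensity A 0 :=
  squeeze_zero (fun _ => by positivity) (fun _ => by gcongr) hB

namespace IsSMetric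

variable {X : Type*} {S : X → X → X → ℝ}

lemma symm (hS : IsSMetric S) (x y : X) : S x x y = S y y x := by
  have h_self (z : X) : S z z z = 0 := (hS.eq_zero_iff z z z).mpr ⟨rfl, rfl⟩
  have h_le (a b : X) : S a a b ≤ S b b a := by
    simpa [h_self] using hS.triangle a a b a
  exact le_antisymm (h_le x y) (h_le y x)

lemma le_add_two_mul (hS : IsSMetric S) (x y z : X) : S x x z ≤ S x x y + 2 * S y y z := by
  have := hS.triangle z z x y
  rw [hS.symm x z, hS.symm y z]
  linarith

end IsSMetric

namespace SRoughStatConvergesTo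

variable {X : Type*} {S : X → X → X → ℝ} {x : ℕ → X} {r r' : ℝ} {p q : X}

lemma mono (hrr' : r ≤ r') (h : SRoughStatConvergesTo S r x p) :
    SRoughStatConvergesTo S r' x p := fun ε hε =>
  (h ε hε).zero_mono fun n (hn : r' + ε ≤ _) => show r + ε ≤ _ by linarith

lemma of_forall_lt (h : ∀ r', r < r' → SRoughStatConvergesTo S r' x p) :
    SRoughStatConvergesTo S r x p := fun ε hε =>
  (h (r + ε / 2) (by linarith) (ε / 2) (by linarith)).zero_mono
    fun n (hn : r + ε ≤ _) => show r + ε / 2 + ε / 2 ≤ _ by linarith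

lemma change_limit (hS : IsSMetric S) (h : SRoughStatConvergesTo S r x p) :
    SRoughStatConvergesTo S (r + 2 * S p p q) x q := fun ε hε =>
  (h ε hε).zero_mono fun n (hn : r + 2 * S p p q + ε ≤ _) =>
    show r + ε ≤ _ by linarith [hS.le_add_two_mul (x n) p q]

end SRoughStatConvergesTo

theorem stmt_13_general {X : Type*} (S : X → X → X → ℝ) (hS : IsSMetric S)
    (r : ℝ) (x : ℕ → X) (ξs : ℕ → X) (ξ : X)
    (hmem : ∀ n : ℕ, ξs n ∈ stLIM S r x) (hconv : SConvergesTo S ξs ξ) :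
    ξ ∈ stLIM S r x := by
  refine SRoughStatConvergesTo.of_forall_lt fun r' hr' => ?_
  obtain ⟨N, hN⟩ := hconv ((r' - r) / 2) (by linarith)
  exact ((hmem N).change_limit hS).mono (by linarith [hN N le_rfl])

theorem stmt_13 {X : Type*} [Nonempty X] (S : X → X → X → ℝ) (hS : IsSMetric S)
    (r : ℝ) (hr : 0 ≤ r) (x : ℕ → X) (ξs : ℕ → X) (ξ : X)
    (hmem : ∀ n : ℕ, ξs n ∈ stLIM S r x) (hconv : SConvergesTo S ξs ξ) :
    ξ ∈ stLIM S r x :=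
  stmt_13_general S hS r x ξs ξ hmem hconv
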